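/- Under the monotonicity condition P(S = n | Y^{n−1}) ≥ P(S = n+1 | Y^n) for all 2 ≤ n ≤ κ, the stopping regions A_n = {y^n : P(S ≤ n | Y^n=y^n) ≥ λP(S=n+1 | Y^n=y^n)} are nested: if y^n ∈ A_n then y^nγ ∈ A_{n+1} for every γ ∈ Y. -/

import Mathlib

/-! With `n = |y|`, the chain
`λ P(S = n+2 | yγ) ≤ λ P(S = n+1 | y) ≤ P(S ≤ n | y) = P(S ≤ n | yγ) ≤ P(S ≤ n+1 | yγ)`
uses the monotonicity hypothesis, `y ∈ A_n`, and the monotonicity of `{S ≤ n}` in `n`.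
The middle equality holds because `{S ≤ n}` and `{Y^n = y}` are decided by the first `n` pairs
`(X_i, Y_i)`, which are independent of `(X_{n+1}, Y_{n+1})`: on the product law of the first `κ`
pairs, an event that ignores one coordinate factors off any event on that coordinate. -/

open Finset
open scoped Classical

noncomputable section

variable {Ω : Type*} [Fintype Ω] {𝒳 : Type*} {𝒴 : Type*}

/-- Probability of an event under weights `p` on a finite sample space. -/
def prW (p : Ω → ℝ) (A : Ω → Prop) : ℝ := ∑ ω, if A ω then p ω else 0

/-- Expectation under weights `p`. -/
def exW (p : Ω → ℝ) (f : Ω → ℝ) : ℝ := ∑ ω, p ω * f ω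

/-- `p` is a probability weight function. -/
def IsProbW (p : Ω → ℝ) : Prop := (∀ ω, 0 ≤ p ω) ∧ ∑ ω, p ω = 1

/-- Conditional probability `P(A | B)`. -/
def cprW (p : Ω → ℝ) (A B : Ω → Prop) : ℝ := prW p (fun ω => A ω ∧ B ω) / prW p B

/-- Conditional expectation `E(f | B)`. -/
def cexW (p : Ω → ℝ) (f : Ω → ℝ) (B : Ω → Prop) : ℝ :=
  (∑ ω, if B ω then p ω * f ω else 0) / prW p B

/-- positive part of a real number -/
def posP (x : ℝ) : ℝ := max x 0

/-- `S` is a (non-randomized) stopping time w.r.t. the process `X` (time starts at 1):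
its value is determined by the observations up to itself. -/
def IsSTW (X : ℕ → Ω → 𝒳) (S : Ω → ℕ) : Prop :=
  ∀ ω ω', (∀ i, 1 ≤ i → i ≤ S ω → X i ω = X i ω') → S ω' = S ω

/-- The path of the process `Y` at sample `ω`. -/
def pathOf (Y : ℕ → Ω → 𝒴) (ω : Ω) : ℕ → 𝒴 := fun i => Y i ω

/-- The path `f` extends (passes through) the node `y` (a finite string). -/
def ExtN (y : List 𝒴) (f : ℕ → 𝒴) : Prop := ∀ i : Fin y.length, f (i.1 + 1) = y.get i

/-- A stopping function on paths: its value depends only on the path up to that value.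
This is the path-representation of a non-randomized stopping time (a tree). -/
def IsStopFun (t : (ℕ → 𝒴) → ℕ) : Prop :=
  ∀ f g, (∀ i, 1 ≤ i → i ≤ t f → f i = g i) → t g = t f

/-- `y` is an internal node of the tree `t`. -/
def InternalNode (t : (ℕ → 𝒴) → ℕ) (y : List 𝒴) : Prop :=
  ∀ f, ExtN y f → y.length < t f

/-- `u` is (the stopping function of) a subtree rooted at node `y`. -/
def IsSubtreeAt (y : List 𝒴) (u : (ℕ → 𝒴) → ℕ) : Prop :=
  IsStopFun u ∧ ∀ f, ExtN y f → y.length ≤ u f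

/-- false-alarm weight `a(y)` of node `y` -/
def aW (p : Ω → ℝ) (Y : ℕ → Ω → 𝒴) (S : Ω → ℕ) (y : List 𝒴) : ℝ :=
  prW p (fun ω => ExtN y (pathOf Y ω) ∧ y.length < S ω)

/-- delay weight `b(y)` of node `y` -/
def bW (p : Ω → ℝ) (Y : ℕ → Ω → 𝒴) (S : Ω → ℕ) (y : List 𝒴) : ℝ :=
  exW p (fun ω => if ExtN y (pathOf Y ω) then posP ((y.length : ℝ) - (S ω : ℝ)) else 0)

/-- false-alarm weight `a(T_y)` of a subtree `u` rooted at `y` (the sum of `a(γ)`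
over its leaves `γ`). -/
def aSubW (p : Ω → ℝ) (Y : ℕ → Ω → 𝒴) (S : Ω → ℕ) (y : List 𝒴) (u : (ℕ → 𝒴) → ℕ) : ℝ :=
  prW p (fun ω => ExtN y (pathOf Y ω) ∧ u (pathOf Y ω) < S ω)

/-- delay weight `b(T_y)` of a subtree `u` rooted at `y` (the sum of `b(γ)` over its leaves). -/
def bSubW (p : Ω → ℝ) (Y : ℕ → Ω → 𝒴) (S : Ω → ℕ) (y : List 𝒴) (u : (ℕ → 𝒴) → ℕ) : ℝ :=
  exW p (fun ω => if ExtN y (pathOf Y ω) then posP ((u (pathOf Y ω) : ℝ) - (S ω : ℝ)) else 0)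

/-- Lagrangian cost `J_λ(T_y)` of the subtree `u` rooted at `y`. -/
def JsubW (p : Ω → ℝ) (Y : ℕ → Ω → 𝒴) (S : Ω → ℕ) (lam : ℝ) (y : List 𝒴)
    (u : (ℕ → 𝒴) → ℕ) : ℝ :=
  bSubW p Y S y u + lam * aSubW p Y S y u

/-- Lagrangian cost `J_λ(y)` of the single node `y`. -/
def JnodeW (p : Ω → ℝ) (Y : ℕ → Ω → 𝒴) (S : Ω → ℕ) (lam : ℝ) (y : List 𝒴) : ℝ :=
  bW p Y S y + lam * aW p Y S y

/-- `u` is the smallest minimal-cost rooted subtree `T_y(λ)` of `t` at node `y`,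
for Lagrange multiplier `lam`. -/
def IsOptSubtreeAt (p : Ω → ℝ) (Y : ℕ → Ω → 𝒴) (S : Ω → ℕ) (lam : ℝ)
    (t : (ℕ → 𝒴) → ℕ) (y : List 𝒴) (u : (ℕ → 𝒴) → ℕ) : Prop :=
  IsSubtreeAt y u ∧ (∀ f, ExtN y f → u f ≤ t f) ∧
  (∀ v, IsSubtreeAt y v → (∀ f, ExtN y f → v f ≤ t f) →
    JsubW p Y S lam y u ≤ JsubW p Y S lam y v) ∧
  (∀ v, IsSubtreeAt y v → (∀ f, ExtN y f → v f ≤ t f) →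
    JsubW p Y S lam y v = JsubW p Y S lam y u → ∀ f, ExtN y f → u f ≤ v f)

/-- the tradeoff quantity `g(y, T) = (b(T_y) - b(y)) / (a(y) - a(T_y))`
(with the convention 0/0 = 0, which holds automatically for real division). -/
def gW (p : Ω → ℝ) (Y : ℕ → Ω → 𝒴) (S : Ω → ℕ) (t : (ℕ → 𝒴) → ℕ) (y : List 𝒴) : ℝ :=
  (bSubW p Y S y t - bW p Y S y) / (aW p Y S y - aSubW p Y S y t)

/-- node permuted by a coordinate permutation -/
def permNode (y : List 𝒴) (π : Equiv.Perm (Fin y.length)) : List 𝒴 :=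
  List.ofFn fun i => y.get (π i)

/-- permutation invariance of a stopping time w.r.t. process `Y`:
`P(T ≤ n | Y^n = y^n) = P(T ≤ n | Y^n = π(y^n))`. -/
def PermInvST (p : Ω → ℝ) (Y : ℕ → Ω → 𝒴) (T : Ω → ℕ) (κ : ℕ) : Prop :=
  ∀ y : List 𝒴, y.length ≤ κ → ∀ π : Equiv.Perm (Fin y.length),
    cprW p (fun ω => T ω ≤ y.length) (fun ω => ExtN y (pathOf Y ω)) =
    cprW p (fun ω => T ω ≤ y.length) (fun ω => ExtN (permNode y π) (pathOf Y ω))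

/-- the pairs `(X_i, Y_i)` are i.i.d. (over the first `κ` time steps). -/
def IIDPairs [Fintype 𝒳] [Fintype 𝒴] (p : Ω → ℝ) (X : ℕ → Ω → 𝒳) (Y : ℕ → Ω → 𝒴)
    (κ : ℕ) : Prop :=
  ∃ μ : 𝒳 × 𝒴 → ℝ, (∀ z, 0 ≤ μ z) ∧ (∑ z, μ z = 1) ∧
    ∀ (x : ℕ → 𝒳) (yf : ℕ → 𝒴),
      prW p (fun ω => ∀ i, 1 ≤ i → i ≤ κ → X i ω = x i ∧ Y i ω = yf i) =
        ∏ i ∈ Finset.Icc 1 κ, μ (x i, yf i)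

/-- a randomized stopping time bounded by `κ`, given by its conditional stopping
kernel `q n y^n = P(T = n | Y^n = y^n)`. -/
def IsRandST (q : ℕ → (ℕ → 𝒴) → ℝ) (κ : ℕ) : Prop :=
  (∀ n f, 0 ≤ q n f) ∧
  (∀ n f g, (∀ i, 1 ≤ i → i ≤ n → f i = g i) → q n g = q n f) ∧
  (∀ f, ∑ n ∈ Finset.Icc 1 κ, q n f = 1)

/-- false-alarm probability `P(T < S)` of a randomized stopping time -/
def faR (p : Ω → ℝ) (Y : ℕ → Ω → 𝒴) (S : Ω → ℕ) (κ : ℕ) (q : ℕ → (ℕ → 𝒴) → ℝ) : ℝ :=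
  exW p (fun ω => ∑ n ∈ Finset.Icc 1 κ, q n (pathOf Y ω) * (if n < S ω then 1 else 0))

/-- expected reaction delay `E(T - S)⁺` of a randomized stopping time -/
def delayR (p : Ω → ℝ) (Y : ℕ → Ω → 𝒴) (S : Ω → ℕ) (κ : ℕ) (q : ℕ → (ℕ → 𝒴) → ℝ) : ℝ :=
  exW p (fun ω => ∑ n ∈ Finset.Icc 1 κ, q n (pathOf Y ω) * posP ((n : ℝ) - (S ω : ℝ)))

/-- the optimal tradeoff curve `d(α)` -/
def dW (p : Ω → ℝ) (Y : ℕ → Ω → 𝒴) (S : Ω → ℕ) (κ : ℕ) (α : ℝ) : ℝ :=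
  sInf {v | ∃ q, IsRandST q κ ∧ faR p Y S κ q ≤ α ∧ v = delayR p Y S κ q}

/-- the stopping kernel of a non-randomized stopping function -/
def detKer (t : (ℕ → 𝒴) → ℕ) : ℕ → (ℕ → 𝒴) → ℝ := fun n f => if t f = n then 1 else 0

/-- prefix of length `n` of a path (the node of depth `n` it visits) -/
def prefixOf (f : ℕ → 𝒴) (n : ℕ) : List 𝒴 := (List.range n).map fun i => f (i + 1)

/-- the one-step-lookahead node cost `c(y^n)` -/
def cnodeW (p : Ω → ℝ) (Y : ℕ → Ω → 𝒴) (S : Ω → ℕ) (lam : ℝ) (y : List 𝒴) : ℝ :=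
  cexW p (fun ω => posP ((y.length : ℝ) - (S ω : ℝ))) (fun ω => ExtN y (pathOf Y ω)) +
    lam * cprW p (fun ω => y.length < S ω) (fun ω => ExtN y (pathOf Y ω))

end

section WeightedProbability

variable {Ω : Type*} [Fintype Ω] {p : Ω → ℝ}

lemma prW_nonneg (hp : ∀ ω, 0 ≤ p ω) (A : Ω → Prop) : 0 ≤ prW p A :=
  Finset.sum_nonneg fun ω _ => by split_ifs <;> simp [hp ω]

lemma prW_mono (hp : ∀ ω, 0 ≤ p ω) {A B : Ω → Prop} (h : ∀ ω, A ω → B ω) :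
    prW p A ≤ prW p B :=
  Finset.sum_le_sum fun ω _ => by
    split_ifs with hA hB
    exacts [le_rfl, absurd (h ω hA) hB, hp ω, le_rfl]

lemma prW_congr {A B : Ω → Prop} (h : ∀ ω, A ω ↔ B ω) : prW p A = prW p B := by
  simp only [prW, h]

lemma cprW_mono_left (hp : ∀ ω, 0 ≤ p ω) {A A' : Ω → Prop} (h : ∀ ω, A ω → A' ω)
    (B : Ω → Prop) : cprW p A B ≤ cprW p A' B :=
  div_le_div_of_nonneg_right (prW_mono hp fun ω hω => ⟨h ω hω.1, hω.2⟩) (prW_nonneg hp B)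

lemma prW_comp_eq_sum {β : Type*} [Fintype β] (Z : Ω → β) (P : β → Prop) :
    prW p (fun ω => P (Z ω)) = ∑ b, if P b then prW p (fun ω => Z ω = b) else 0 := by
  calc prW p (fun ω => P (Z ω))
      = ∑ ω, ∑ b, if Z ω = b then (if P b then p ω else 0) else 0 := by simp [prW]
    _ = _ := by
      rw [Finset.sum_comm]
      refine Finset.sum_congr rfl fun b _ => ?_
      split_ifs <;> simp [prW]

end WeightedProbability

section Tuples

variable {α : Type*} [Fintype α] {k : ℕ}

lemma sum_eq_sum_insertNth {M : Type*} [AddCommMonoid M] (m : Fin (k + 1))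
    (F : (Fin (k + 1) → α) → M) :
    ∑ z, F z = ∑ a, ∑ r : Fin k → α, F (Fin.insertNth (α := fun _ => α) m a r) :=
  (Fintype.sum_equiv (Fin.insertNthEquiv (fun _ => α) m) _ _ fun _ => rfl).symm.trans
    (Fintype.sum_prod_type _)

lemma sum_ite_and_apply_eq_mul (w : α → ℝ) (hw : ∑ a, w a = 1) (m : Fin (k + 1))
    (E : (Fin (k + 1) → α) → Prop) (hE : ∀ z a, E (Function.update z m a) ↔ E z)
    (Q : α → Prop) :
    ∑ z : Fin (k + 1) → α, (if E z ∧ Q (z m) then ∏ j, w (z j) else 0) =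
      (∑ z : Fin (k + 1) → α, if E z then ∏ j, w (z j) else 0) *
        ∑ a, if Q a then w a else 0 := by
  let G : α → ℝ := fun a => ∑ r : Fin k → α,
    if E (Fin.insertNth (α := fun _ => α) m a r) then ∏ i, w (r i) else 0
  have hG : ∀ a b, G b = G a := fun a b => by
    refine Finset.sum_congr rfl fun r _ => ?_
    rw [← Fin.update_insertNth (α := fun _ => α) m a b r, hE]
  have hprod : ∀ a r, ∏ j, w (Fin.insertNth (α := fun _ => α) m a r j) =
      w a * ∏ i, w (r i) := fun a r => by
    simp [Fin.prod_univ_succAbove _ m]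
  have hL : ∑ z : Fin (k + 1) → α, (if E z ∧ Q (z m) then ∏ j, w (z j) else 0) =
      ∑ a, (if Q a then w a else 0) * G a := by
    rw [sum_eq_sum_insertNth m]
    refine Finset.sum_congr rfl fun a _ => ?_
    rw [Finset.mul_sum]
    refine Finset.sum_congr rfl fun r _ => ?_
    simp only [Fin.insertNth_apply_same, hprod]
    split_ifs <;> simp_all
  have hR : ∑ z : Fin (k + 1) → α, (if E z then ∏ j, w (z j) else 0) = ∑ b, w b * G b := by
    rw [sum_eq_sum_insertNth m]
    refine Finset.sum_congr rfl fun b _ => ?_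
    simp only [G, Finset.mul_sum, hprod, mul_ite, mul_zero]
  rw [hL, hR, Finset.mul_sum]
  refine Finset.sum_congr rfl fun a _ => ?_
  rw [mul_comm]
  congr 1
  simp only [hG a, ← Finset.sum_mul, hw, one_mul]

lemma sum_prod_eq_one (w : α → ℝ) (hw : ∑ a, w a = 1) (n : ℕ) :
    ∑ z : Fin n → α, ∏ j, w (z j) = 1 := by
  rw [← Fintype.sum_pow, hw, one_pow]

end Tuples

section Determined

variable {Ω α β : Type*}

lemma extN_iff {y : List α} {f : ℕ → α} :
    ExtN y f ↔ ∀ i (hi : i < y.length), f (i + 1) = y[i] :=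
  ⟨fun h i hi => h ⟨i, hi⟩, fun h i => h i i.2⟩

lemma extN_append (y : List α) (γ : α) (f : ℕ → α) :
    ExtN (y ++ [γ]) f ↔ ExtN y f ∧ f (y.length + 1) = γ := by
  simp only [extN_iff]
  constructor
  · intro h
    refine ⟨fun i hi => ?_, by simpa using h y.length (by simp)⟩
    rw [h i (by simp; omega), List.getElem_append_left hi]
  · rintro ⟨h, hγ⟩ i hi
    obtain hi' | rfl : i < y.length ∨ i = y.length := by simp at hi; omega
    · simpa [List.getElem_append_left hi'] using h i hi'
    · simpa using hγ

def IsDeterminedUpTo (W : ℕ → Ω → α) (n : ℕ) (E : Ω → Prop) : Prop :=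
  ∀ ω ω', (∀ i, 1 ≤ i → i ≤ n → W i ω = W i ω') → E ω → E ω'

lemma IsDeterminedUpTo.of_comp {W : ℕ → Ω → α} (f : α → β) {n : ℕ} {E : Ω → Prop}
    (hE : IsDeterminedUpTo (fun i ω => f (W i ω)) n E) : IsDeterminedUpTo W n E :=
  fun ω ω' hag => hE ω ω' fun i h1 hi => congrArg f (hag i h1 hi)

lemma IsDeterminedUpTo.and {W : ℕ → Ω → α} {n : ℕ} {E F : Ω → Prop}
    (hE : IsDeterminedUpTo W n E) (hF : IsDeterminedUpTo W n F) :
    IsDeterminedUpTo W n fun ω => E ω ∧ F ω :=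
  fun ω ω' hag h => ⟨hE ω ω' hag h.1, hF ω ω' hag h.2⟩

lemma isDeterminedUpTo_extN (Y : ℕ → Ω → α) (y : List α) :
    IsDeterminedUpTo Y y.length fun ω => ExtN y (pathOf Y ω) :=
  fun ω ω' hag h i => (hag (i + 1) (by omega) i.2).symm.trans (h i)

lemma IsSTW.isDeterminedUpTo_le {X : ℕ → Ω → α} {S : Ω → ℕ} (hS : IsSTW X S) (n : ℕ) :
    IsDeterminedUpTo X n fun ω => S ω ≤ n := fun ω ω' hag hle => by
  have := hS ω ω' fun i h1 hi => hag i h1 (hi.trans hle)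
  omega

end Determined

section IIDLaw

variable {Ω : Type*} [Fintype Ω] {α β : Type*} {p : Ω → ℝ}

def initialTuple (W : ℕ → Ω → α) (n : ℕ) (ω : Ω) : Fin n → α := fun j => W (j + 1) ω

def HasIIDLaw (p : Ω → ℝ) (W : ℕ → Ω → α) (κ : ℕ) (μ : α → ℝ) : Prop :=
  ∀ w : ℕ → α, prW p (fun ω => ∀ i, 1 ≤ i → i ≤ κ → W i ω = w i) = ∏ i ∈ Icc 1 κ, μ (w i)

lemma IIDPairs.exists_hasIIDLaw [Fintype α] [Fintype β] {X : ℕ → Ω → α} {Y : ℕ → Ω → β}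
    {κ : ℕ} (h : IIDPairs p X Y κ) :
    ∃ μ : α × β → ℝ, ∑ z, μ z = 1 ∧ HasIIDLaw p (fun i ω => (X i ω, Y i ω)) κ μ := by
  obtain ⟨μ, -, hμ, hprod⟩ := h
  refine ⟨μ, hμ, fun w => ?_⟩
  simpa only [Prod.ext_iff] using hprod (fun i => (w i).1) (fun i => (w i).2)

lemma HasIIDLaw.prW_initialTuple_eq {W : ℕ → Ω → α} {k : ℕ} {μ : α → ℝ}
    (hW : HasIIDLaw p W (k + 1) μ) (z : Fin (k + 1) → α) :
    prW p (fun ω => initialTuple W (k + 1) ω = z) = ∏ j, μ (z j) := by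
  let w : ℕ → α := fun i => if h : i - 1 < k + 1 then z ⟨i - 1, h⟩ else z 0
  have hw : ∀ j : Fin (k + 1), w (j + 1) = z j := fun j => by simp [w, Fin.is_le j]
  have hevent : ∀ ω, initialTuple W (k + 1) ω = z ↔
      ∀ i, 1 ≤ i → i ≤ k + 1 → W i ω = w i := fun ω => by
    refine ⟨fun h i h1 hi => ?_, fun h => funext fun j => (h (j + 1) (by omega) j.2).trans (hw j)⟩
    obtain ⟨j, rfl⟩ : ∃ j : Fin (k + 1), i = j + 1 := ⟨⟨i - 1, by omega⟩, by simp; omega⟩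
    rw [hw, ← h]
    rfl
  rw [prW_congr hevent, hW, ← Finset.Ico_add_one_right_eq_Icc, Finset.prod_Ico_eq_prod_range,
    Nat.add_sub_cancel, ← Fin.prod_univ_eq_prod_range (fun i => μ (w (1 + i)))]
  exact Finset.prod_congr rfl fun j _ => by rw [add_comm, hw]

theorem HasIIDLaw.prW_and_eq_mul [Fintype α] {W : ℕ → Ω → α} {k : ℕ} {μ : α → ℝ}
    (hμ : ∑ a, μ a = 1) (hW : HasIIDLaw p W (k + 1) μ) {n : ℕ} (hn : n ≤ k) {E : Ω → Prop}
    (hE : IsDeterminedUpTo W n E) (B : α → Prop) :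
    prW p (fun ω => E ω ∧ B (W (n + 1) ω)) = prW p E * prW p (fun ω => B (W (n + 1) ω)) := by
  let m : Fin (k + 1) := ⟨n, by omega⟩
  -- `E` transported to tuples; it ignores every coordinate from `n` on, in particular `m`
  let Ehat : (Fin (k + 1) → α) → Prop := fun z =>
    ∃ ω, (∀ j : Fin (k + 1), (j : ℕ) < n → W (j + 1) ω = z j) ∧ E ω
  have hEhat : ∀ ω, E ω ↔ Ehat (initialTuple W (k + 1) ω) := fun ω => by
    refine ⟨fun h => ⟨ω, fun _ _ => rfl, h⟩, fun ⟨ω', hag, h⟩ => hE ω' ω (fun i h1 hi => ?_) h⟩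
    obtain ⟨j, rfl⟩ : ∃ j, i = j + 1 := ⟨i - 1, by omega⟩
    exact hag ⟨j, by omega⟩ (by simp only; omega)
  have hupdate : ∀ z a, Ehat (Function.update z m a) ↔ Ehat z := fun z a =>
    exists_congr fun ω => and_congr_left fun _ => forall₂_congr fun j hj => by
      rw [Function.update_of_ne (Fin.ne_of_val_ne hj.ne)]
  have hlaw : ∀ P : (Fin (k + 1) → α) → Prop, prW p (fun ω => P (initialTuple W (k + 1) ω)) =
      ∑ z, if P z then ∏ j, μ (z j) else 0 := fun P => by
    simp only [prW_comp_eq_sum, hW.prW_initialTuple_eq]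
  have hB : prW p (fun ω => B (W (n + 1) ω)) = ∑ a, if B a then μ a else 0 := by
    have h := sum_ite_and_apply_eq_mul μ hμ m (fun _ => True) (fun _ _ => Iff.rfl) B
    simp only [true_and, if_true, sum_prod_eq_one μ hμ, one_mul] at h
    exact (hlaw fun z => B (z m)).trans (by convert h)
  rw [prW_congr hEhat, hlaw, hB]
  refine ((prW_congr fun ω => and_congr_left' (hEhat ω)).trans
    (hlaw fun z => Ehat z ∧ B (z m))).trans ?_
  convert sum_ite_and_apply_eq_mul μ hμ m Ehat hupdate B

end IIDLaw

section Lookahead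

variable {Ω 𝒳 𝒴 : Type*} [Fintype Ω] [Fintype 𝒳] [Fintype 𝒴] {p : Ω → ℝ}

lemma cprW_extN_append_eq {X : ℕ → Ω → 𝒳} {Y : ℕ → Ω → 𝒴} {κ : ℕ} (hiid : IIDPairs p X Y κ)
    {y : List 𝒴} (hy : y.length < κ) {A : Ω → Prop} (hA : IsDeterminedUpTo X y.length A)
    (γ : 𝒴) (hpos : prW p (fun ω => ExtN (y ++ [γ]) (pathOf Y ω)) ≠ 0) :
    cprW p A (fun ω => ExtN (y ++ [γ]) (pathOf Y ω)) =
      cprW p A (fun ω => ExtN y (pathOf Y ω)) := by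
  obtain ⟨μ, hμ, hW⟩ := hiid.exists_hasIIDLaw
  obtain ⟨k, rfl⟩ : ∃ k, κ = k + 1 := ⟨κ - 1, by omega⟩
  have hy' : IsDeterminedUpTo (fun i ω => (X i ω, Y i ω)) y.length
      fun ω => ExtN y (pathOf Y ω) := (isDeterminedUpTo_extN Y y).of_comp Prod.snd
  have hnum := hW.prW_and_eq_mul hμ (by omega) ((hA.of_comp Prod.fst).and hy') (·.2 = γ)
  have hden := hW.prW_and_eq_mul hμ (by omega) hy' (·.2 = γ)
  have happend : ∀ ω, ExtN (y ++ [γ]) (pathOf Y ω) ↔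
      ExtN y (pathOf Y ω) ∧ Y (y.length + 1) ω = γ := fun ω => extN_append y γ _
  have hq : prW p (fun ω => Y (y.length + 1) ω = γ) ≠ 0 := fun h => hpos <| by
    rw [prW_congr happend, hden, h, mul_zero]
  unfold cprW
  rw [prW_congr fun ω => (and_congr_right' (happend ω)).trans and_assoc.symm,
    prW_congr happend, hnum, hden, mul_div_mul_right _ _ hq]

end Lookahead

theorem lookahead_regions_nested_general
    {Ω 𝒳 𝒴 : Type*} [Fintype Ω] [Fintype 𝒳] [Fintype 𝒴]
    (p : Ω → ℝ) (hp : IsProbW p) (X : ℕ → Ω → 𝒳) (Y : ℕ → Ω → 𝒴) (κ : ℕ)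
    (hiid : IIDPairs p X Y κ)
    (S : Ω → ℕ) (hS : IsSTW X S)
    (lam : ℝ) (hlam : 0 ≤ lam)
    (hmono : ∀ n : ℕ, 2 ≤ n → n ≤ κ → ∀ y : List 𝒴, y.length = n - 1 → ∀ γ : 𝒴,
      cprW p (fun ω => S ω = n + 1) (fun ω => ExtN (y ++ [γ]) (pathOf Y ω)) ≤
        cprW p (fun ω => S ω = n) (fun ω => ExtN y (pathOf Y ω))) :
    ∀ y : List 𝒴, 1 ≤ y.length → y.length < κ →
      lam * cprW p (fun ω => S ω = y.length + 1) (fun ω => ExtN y (pathOf Y ω)) ≤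
        cprW p (fun ω => S ω ≤ y.length) (fun ω => ExtN y (pathOf Y ω)) →
      ∀ γ : 𝒴,
        lam * cprW p (fun ω => S ω = (y ++ [γ]).length + 1)
            (fun ω => ExtN (y ++ [γ]) (pathOf Y ω)) ≤
          cprW p (fun ω => S ω ≤ (y ++ [γ]).length)
            (fun ω => ExtN (y ++ [γ]) (pathOf Y ω)) := by
  intro y hy1 hyκ hA γ
  simp only [List.length_append, List.length_singleton]
  by_cases hpos : prW p (fun ω => ExtN (y ++ [γ]) (pathOf Y ω)) = 0
  · simp [cprW, hpos]
  calc lam * cprW p (fun ω => S ω = y.length + 1 + 1) (fun ω => ExtN (y ++ [γ]) (pathOf Y ω))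
      ≤ lam * cprW p (fun ω => S ω = y.length + 1) (fun ω => ExtN y (pathOf Y ω)) :=
        mul_le_mul_of_nonneg_left (hmono _ (by omega) (by omega) y (by omega) γ) hlam
    _ ≤ cprW p (fun ω => S ω ≤ y.length) (fun ω => ExtN y (pathOf Y ω)) := hA
    _ = cprW p (fun ω => S ω ≤ y.length) (fun ω => ExtN (y ++ [γ]) (pathOf Y ω)) :=
        (cprW_extN_append_eq hiid hyκ (hS.isDeterminedUpTo_le _) γ hpos).symm
    _ ≤ cprW p (fun ω => S ω ≤ y.length + 1) (fun ω => ExtN (y ++ [γ]) (pathOf Y ω)) :=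
        cprW_mono_left hp.1 (fun ω h => by omega) _

/-- under the monotonicity condition
`P(S = n | Y^{n-1}) ≥ P(S = n+1 | Y^n)` for all `2 ≤ n ≤ κ`, the one-step-lookahead
stopping regions `A_n = {y^n : P(S ≤ n|Y^n=y^n) ≥ λ P(S=n+1|Y^n=y^n)}` are nested:
`y^n ∈ A_n` implies `y^nγ ∈ A_{n+1}` for every `γ`. -/
theorem lookahead_regions_nested
    {Ω 𝒳 𝒴 : Type*} [Fintype Ω] [Fintype 𝒳] [Fintype 𝒴]
    (p : Ω → ℝ) (hp : IsProbW p) (X : ℕ → Ω → 𝒳) (Y : ℕ → Ω → 𝒴) (κ : ℕ)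
    (hiid : IIDPairs p X Y κ)
    (S : Ω → ℕ) (hS : IsSTW X S) (hSb : ∀ ω, 1 ≤ S ω ∧ S ω ≤ κ)
    (lam : ℝ) (hlam : 0 ≤ lam)
    (hmono : ∀ n : ℕ, 2 ≤ n → n ≤ κ → ∀ y : List 𝒴, y.length = n - 1 → ∀ γ : 𝒴,
      cprW p (fun ω => S ω = n + 1) (fun ω => ExtN (y ++ [γ]) (pathOf Y ω)) ≤
        cprW p (fun ω => S ω = n) (fun ω => ExtN y (pathOf Y ω))) :
    ∀ y : List 𝒴, 1 ≤ y.length → y.length < κ →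
      lam * cprW p (fun ω => S ω = y.length + 1) (fun ω => ExtN y (pathOf Y ω)) ≤
        cprW p (fun ω => S ω ≤ y.length) (fun ω => ExtN y (pathOf Y ω)) →
      ∀ γ : 𝒴,
        lam * cprW p (fun ω => S ω = (y ++ [γ]).length + 1)
            (fun ω => ExtN (y ++ [γ]) (pathOf Y ω)) ≤
          cprW p (fun ω => S ω ≤ (y ++ [γ]).length)
            (fun ω => ExtN (y ++ [γ]) (pathOf Y ω)) :=
  lookahead_regions_nested_general p hp X Y κ hiid S hS lam hlam hmono
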